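/- arXiv:1401.4966 — 4 statements merged into one kernel-verified Lean document; each statement's English description precedes it below -/
import Mathlib

section
/- If m is an even positive integer, then for every nonzero real vector x in R^n, the Hilbert tensor form H_n x^m = \sum_{i_1,...,i_m=1}^n x_{i_1} \cdots x_{i_m} / (i_1 + \cdots + i_m - m + 1) is strictly positive; that is, the m-order n-dimensional Hilbert tensor is positive definite. -/
/-!
Expanding the `m`-th power of `p(t) = ∑ᵢ xᵢ tⁱ` and integrating term by term gives
`H_n x^m = ∫₀¹ p(t)^m dt`. For even `m` the integrand is nonnegative, and for `x ≠ 0` it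
vanishes only at the finitely many roots of the nonzero polynomial `p`, so the integral is positive.
-/

open MeasureTheory Polynomial Set

/-- The Hilbert tensor form `H_n x^m` (indices written 0-based, so the
denominator `i_1 + ... + i_m - m + 1` becomes `(∑ j, i j) + 1`). -/
noncomputable def hilbertForm (m n : ℕ) (x : Fin n → ℝ) : ℝ :=
  ∑ i : Fin m → Fin n, (∏ j, x (i j)) / (((∑ j, (i j : ℕ)) + 1 : ℕ) : ℝ)

theorem sum_mul_pow_pow_eq_sum_pi {R ι : Type*} [CommSemiring R] [Fintype ι] [DecidableEq ι]
    (m : ℕ) (x : ι → R) (e : ι → ℕ) (t : R) :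
    (∑ i, x i * t ^ e i) ^ m = ∑ p : Fin m → ι, (∏ j, x (p j)) * t ^ ∑ j, e (p j) := by
  rw [Finset.sum_pow', Fintype.piFinset_univ]
  simp only [Finset.prod_mul_distrib, Finset.prod_pow_eq_pow_sum]

theorem hilbertForm_eq_integral (m n : ℕ) (x : Fin n → ℝ) :
    hilbertForm m n x = ∫ t in (0 : ℝ)..1, (∑ i, x i * t ^ (i : ℕ)) ^ m := by
  simp_rw [sum_mul_pow_pow_eq_sum_pi]
  rw [intervalIntegral.integral_finsetSum fun p _ =>
    (by fun_prop : Continuous _).intervalIntegrable 0 1]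
  refine Finset.sum_congr rfl fun p _ => ?_
  rw [intervalIntegral.integral_const_mul, integral_pow]
  push_cast
  ring

theorem Polynomial.eval_ofFn {R : Type*} [CommSemiring R] [DecidableEq R] (n : ℕ)
    (x : Fin n → R) (t : R) : (ofFn n x).eval t = ∑ i, x i * t ^ (i : ℕ) := by
  simp [ofFn_eq_sum_monomial, eval_finsetSum]

theorem Polynomial.integral_eval_pow_pos_of_even {p : ℝ[X]} (hp : p ≠ 0) {m : ℕ} (hm : Even m)
    {a b : ℝ} (hab : a < b) : 0 < ∫ t in a..b, p.eval t ^ m := by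
  have hnonneg : 0 ≤ᵐ[volume.restrict (uIoc a b)] fun t => p.eval t ^ m :=
    Filter.Eventually.of_forall fun t => hm.pow_nonneg _
  rw [intervalIntegral.integral_pos_iff_support_of_nonneg_ae' hnonneg
    ((by fun_prop : Continuous fun t => p.eval t ^ m).intervalIntegrable a b)]
  have hsub : Ioc a b \ {t | p.IsRoot t} ⊆ Function.support (fun t => p.eval t ^ m) ∩ Ioc a b :=
    fun t ⟨ht, hroot⟩ => ⟨pow_ne_zero m hroot, ht⟩
  refine ⟨hab, ?_⟩
  calc 0 < volume (Ioc a b) := by simpa using hab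
    _ = volume (Ioc a b \ {t | p.IsRoot t}) :=
      (measure_sdiff_null ((finite_setOfPred_isRoot hp).measure_zero _)).symm
    _ ≤ _ := measure_mono hsub

theorem hilbertForm_pos_of_even_general (m n : ℕ) (hme : Even m)
    (x : Fin n → ℝ) (hx : x ≠ 0) :
    0 < hilbertForm m n x := by
  classical
  have hp : ofFn n x ≠ 0 := (map_ne_zero_iff _ (injective_ofFn n)).mpr hx
  simpa only [hilbertForm_eq_integral, eval_ofFn] using
    integral_eval_pow_pos_of_even hp hme zero_lt_one

theorem hilbertForm_pos_of_even (m n : ℕ) (hm : 0 < m) (hme : Even m)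
    (x : Fin n → ℝ) (hx : x ≠ 0) :
    0 < hilbertForm m n x :=
  hilbertForm_pos_of_even_general m n hme x hx
end

section
/- For every x in l^1 (real absolutely summable sequences) and every index i \geq 1, the i-th component of the infinite dimensional Hilbert tensor applied to x, namely (H_\infty x^{m-1})_i = \sum_{i_2,...,i_m=1}^\infty x_{i_2} \cdots x_{i_m} / (i + i_2 + \cdots + i_m - m + 1), converges absolutely and satisfies |(H_\infty x^{m-1})_i| \leq (1/i) \|x\|_1^{m-1}. -/
lemma prod_abs_summable (x : ℕ → ℝ) (hx : Summable fun i => |x i|) (n : ℕ) :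
    Summable (fun j : Fin n → ℕ => ∏ k, |x (j k)|) ∧
    (∑' j : Fin n → ℕ, ∏ k, |x (j k)|) = (∑' k, |x k|) ^ n := by
  induction n with
  | zero =>
    haveI : Unique (Fin 0 → ℕ) := Pi.uniqueOfIsEmpty _
    constructor
    · exact Summable.of_finite
    · simp [tsum_eq_single (default : Fin 0 → ℕ)
        (fun b hb => absurd (Subsingleton.elim b default) hb)]
  | succ n ih =>
    have key : ∀ p : ℕ × (Fin n → ℕ),
        (∏ k, |x ((Fin.consEquiv (fun _ => ℕ)) p k)|) = |x p.1| * ∏ k, |x (p.2 k)| := by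
      intro p
      simp only [Fin.consEquiv_apply]
      rw [Fin.prod_univ_succ]
      simp [Fin.cons_zero, Fin.cons_succ]
    have hs : Summable (fun p : ℕ × (Fin n → ℕ) => |x p.1| * ∏ k, |x (p.2 k)|) :=
      Summable.mul_of_nonneg (f := fun k : ℕ => |x k|)
        (g := fun j : Fin n → ℕ => ∏ k, |x (j k)|) hx ih.1
        (fun k => abs_nonneg _) (fun j => Finset.prod_nonneg fun k _ => abs_nonneg _)
    constructor
    · rw [← (Fin.consEquiv (fun _ => ℕ)).summable_iff]
      exact hs.congr fun p => (key p).symm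
    · rw [← (Fin.consEquiv (fun _ => ℕ)).tsum_eq, tsum_congr key]
      have := tsum_mul_tsum_of_summable_norm (f := fun k : ℕ => |x k|)
        (g := fun j : Fin n → ℕ => ∏ k, |x (j k)|)
        (by simpa [abs_abs] using hx)
        (by
          refine ih.1.congr fun j => ?_
          rw [Real.norm_eq_abs, abs_of_nonneg (Finset.prod_nonneg fun k _ => abs_nonneg _)])
      rw [← this, ih.2, pow_succ, mul_comm]

theorem hilbertComp_abs_le (m : ℕ) (hm : 2 ≤ m) (x : ℕ → ℝ)
    (hx : Summable fun i => |x i|) (i : ℕ) :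
    Summable (fun j : Fin (m - 1) → ℕ =>
        |(∏ k, x (j k)) / (((i + ∑ k, j k) + 1 : ℕ) : ℝ)|) ∧
    |∑' j : Fin (m - 1) → ℕ, (∏ k, x (j k)) / (((i + ∑ k, j k) + 1 : ℕ) : ℝ)|
      ≤ (1 / ((i : ℝ) + 1)) * (∑' k, |x k|) ^ (m - 1) := by
  obtain ⟨hsum, htsum⟩ := prod_abs_summable x hx (m - 1)
  set F : (Fin (m - 1) → ℕ) → ℝ :=
    fun j => (∏ k, x (j k)) / (((i + ∑ k, j k) + 1 : ℕ) : ℝ) with hF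
  set G : (Fin (m - 1) → ℕ) → ℝ :=
    fun j => (∏ k, |x (j k)|) * (1 / ((i : ℝ) + 1)) with hG
  have hle : ∀ j, |F j| ≤ G j := by
    intro j
    rw [hF, hG]
    simp only
    rw [abs_div, Finset.abs_prod]
    rw [abs_of_nonneg (by positivity : (0:ℝ) ≤ (((i + ∑ k, j k) + 1 : ℕ) : ℝ))]
    rw [div_eq_mul_one_div]
    refine mul_le_mul_of_nonneg_left ?_ (Finset.prod_nonneg fun k _ => abs_nonneg _)
    apply one_div_le_one_div_of_le (by positivity)
    push_cast
    have : (0:ℝ) ≤ ∑ k, (j k : ℝ) :=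
      Finset.sum_nonneg fun k _ => Nat.cast_nonneg _
    linarith
  have hsumG : Summable G := hsum.mul_right _
  have hsum2 : Summable (fun j => |F j|) :=
    Summable.of_nonneg_of_le (fun j => abs_nonneg _) hle hsumG
  refine ⟨hsum2, ?_⟩
  calc |∑' j, F j| ≤ ∑' j, |F j| := by
        simpa using norm_tsum_le_tsum_norm (f := F) (by simpa using hsum2)
    _ ≤ ∑' j, G j := Summable.tsum_le_tsum hle hsum2 hsumG
    _ = (1 / ((i : ℝ) + 1)) * (∑' k, |x k|) ^ (m - 1) := by
        rw [hG, tsum_mul_right, htsum, mul_comm]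
end

section
/- The operator T_\infty defined by T_\infty x = \|x\|_1^{2-m} H_\infty x^{m-1} for x \neq 0 and T_\infty 0 = 0 maps l^1 boundedly into l^2, with operator norm \sup_{\|x\|_1 = 1} \|T_\infty x\|_2 \leq \pi / \sqrt{6}. -/
/-- The `i`-th component of `H_∞ x^{m-1}` (indices 0-based, so the denominator
`i + i_2 + ... + i_m - m + 1` becomes `(i + ∑ k, j k) + 1`). -/
noncomputable def hilbertComp (m : ℕ) (x : ℕ → ℝ) (i : ℕ) : ℝ :=
  ∑' j : Fin (m - 1) → ℕ, (∏ k, x (j k)) / (((i + ∑ k, j k) + 1 : ℕ) : ℝ)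

open Classical in
/-- The operator `T_∞`. -/
noncomputable def Tinf (m : ℕ) (x : ℕ → ℝ) (i : ℕ) : ℝ :=
  if x = 0 then 0 else (∑' k, |x k|) ^ (2 - (m : ℤ)) * hilbertComp m x i

/-! Every denominator of `H_∞ x^{m-1}` in row `i` is at least `i + 1`, so
`|(H_∞ x^{m-1})_i| ≤ ‖x‖₁^{m-1} / (i + 1)` and hence
`|(T_∞ x)_i| ≤ ‖x‖₁ / (i + 1)`.
Squaring and summing, `‖T_∞ x‖₂² ≤ ‖x‖₁² ∑ 1/(i+1)² = ‖x‖₁² π²/6`. -/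

open Real

theorem hasSum_fin_pi_prod {ι : Type*} {f : ι → ℝ} {s : ℝ} (hf : ∀ i, 0 ≤ f i)
    (hs : HasSum f s) (n : ℕ) :
    HasSum (fun j : Fin n → ι => ∏ k, f (j k)) (s ^ n) := by
  induction n with
  | zero => simp
  | succ n ih =>
    have hsummable : Summable fun p : ι × (Fin n → ι) => f p.1 * ∏ k, f (p.2 k) :=
      summable_mul_of_summable_norm (f := f) (g := fun j : Fin n → ι => ∏ k, f (j k))
        (hs.summable.congr fun i => (norm_of_nonneg (hf i)).symm)
        (ih.summable.congr fun j => (norm_of_nonneg (Finset.prod_nonneg fun k _ => hf _)).symm)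
    have hcons : (fun j : Fin (n + 1) → ι => ∏ k, f (j k)) =
        (fun p : ι × (Fin n → ι) => f p.1 * ∏ k, f (p.2 k)) ∘
          (Fin.consEquiv fun _ : Fin (n + 1) => ι).symm := by
      funext j
      simp [Fin.prod_univ_succ, Fin.tail]
    rw [pow_succ', hcons, Equiv.hasSum_iff]
    exact HasSum.mul (f := f) (g := fun j : Fin n → ι => ∏ k, f (j k)) hs ih hsummable

theorem hasSum_one_div_succ_sq :
    HasSum (fun n : ℕ => 1 / ((n : ℝ) + 1) ^ 2) (π ^ 2 / 6) := by
  simpa using (hasSum_nat_add_iff' 1).2 hasSum_zeta_two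

theorem summable_sq_and_sqrt_tsum_sq_le {f : ℕ → ℝ} {c : ℝ}
    (hf : ∀ i, |f i| ≤ c / (i + 1)) :
    Summable (fun i => f i ^ 2) ∧ √(∑' i, f i ^ 2) ≤ π / √6 * c := by
  have hc : 0 ≤ c := by simpa using (abs_nonneg _).trans (hf 0)
  have hdom : HasSum (fun i : ℕ => (c / (i + 1)) ^ 2) (c ^ 2 * (π ^ 2 / 6)) := by
    rw [show (fun i : ℕ => (c / (i + 1)) ^ 2) = fun i : ℕ => c ^ 2 * (1 / ((i : ℝ) + 1) ^ 2)
      from funext fun i => by rw [div_pow, mul_one_div]]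
    exact hasSum_one_div_succ_sq.mul_left (c ^ 2)
  have hsq : ∀ i, f i ^ 2 ≤ (c / (i + 1)) ^ 2 := fun i =>
    sq_le_sq' (abs_le.1 (hf i)).1 (abs_le.1 (hf i)).2
  have hsum : Summable fun i => f i ^ 2 :=
    hdom.summable.of_nonneg_of_le (fun i => sq_nonneg _) hsq
  refine ⟨hsum, ?_⟩
  calc √(∑' i, f i ^ 2) ≤ √(c ^ 2 * (π ^ 2 / 6)) :=
        sqrt_le_sqrt (hasSum_le hsq hsum.hasSum hdom)
    _ = π / √6 * c := by
        rw [sqrt_mul (sq_nonneg c), sqrt_sq hc, sqrt_div (sq_nonneg π), sqrt_sq pi_nonneg,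
          mul_comm]

theorem abs_hilbertComp_le (m : ℕ) {x : ℕ → ℝ} (hx : Summable fun i => |x i|) (i : ℕ) :
    |hilbertComp m x i| ≤ (∑' k, |x k|) ^ (m - 1) / (i + 1) := by
  have hprod := (hasSum_fin_pi_prod (fun k => abs_nonneg (x k)) hx.hasSum (m - 1)).div_const
    ((i : ℝ) + 1)
  have hterm : ∀ j : Fin (m - 1) → ℕ,
      ‖(∏ k, x (j k)) / (((i + ∑ k, j k) + 1 : ℕ) : ℝ)‖ ≤
        (∏ k, |x (j k)|) / (i + 1) := by
    intro j
    rw [Real.norm_eq_abs, abs_div, Finset.abs_prod, Nat.abs_cast]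
    gcongr
    push_cast
    have hsum : (0 : ℝ) ≤ ∑ k, (j k : ℝ) := by positivity
    linarith
  have habs := hprod.summable.of_nonneg_of_le (fun _ => norm_nonneg _) hterm
  calc |hilbertComp m x i| ≤ ∑' j : Fin (m - 1) → ℕ,
        ‖(∏ k, x (j k)) / (((i + ∑ k, j k) + 1 : ℕ) : ℝ)‖ := norm_tsum_le_tsum_norm habs
    _ ≤ _ := hasSum_le hterm habs.hasSum hprod

theorem abs_Tinf_le {m : ℕ} (hm : 1 ≤ m) {x : ℕ → ℝ} (hx : Summable fun i => |x i|)
    (i : ℕ) : |Tinf m x i| ≤ (∑' k, |x k|) / (i + 1) := by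
  set A := ∑' k, |x k|
  by_cases hx0 : x = 0
  · simp only [Tinf, if_pos hx0, abs_zero]
    positivity
  have hA : 0 < A := by
    obtain ⟨k, hk⟩ := Function.ne_iff.1 hx0
    exact (abs_pos.2 hk).trans_le (hx.le_tsum k fun _ _ => abs_nonneg _)
  have hexp : (2 - (m : ℤ)) + ((m - 1 : ℕ) : ℤ) = 1 := by omega
  rw [Tinf, if_neg hx0, abs_mul, abs_of_pos (zpow_pos hA _)]
  calc A ^ (2 - (m : ℤ)) * |hilbertComp m x i|
      ≤ A ^ (2 - (m : ℤ)) * (A ^ (m - 1) / (i + 1)) := by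
        gcongr
        exact abs_hilbertComp_le m hx i
    _ = A / (i + 1) := by
        rw [mul_div_assoc', ← zpow_natCast A (m - 1), ← zpow_add₀ hA.ne', hexp, zpow_one]

theorem Tinf_bounded (m : ℕ) (hm : 2 ≤ m) (x : ℕ → ℝ)
    (hx : Summable fun i => |x i|) :
    Summable (fun i : ℕ => (Tinf m x i) ^ 2) ∧
    Real.sqrt (∑' i : ℕ, (Tinf m x i) ^ 2)
      ≤ (Real.pi / Real.sqrt 6) * ∑' k, |x k| :=
  summable_sq_and_sqrt_tsum_sq_le (abs_Tinf_le (by omega) hx)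
end

section
/- The spectral radius of the Hilbert tensor is strictly increasing in dimension: if n < k, then max{H_n x^m : x \in R^n_+, \|x\|_m = 1} < max{H_k y^m : y \in R^k_+, \|y\|_m = 1}. -/
lemma term_nonneg {m n : ℕ} {x : Fin n → ℝ} (hx : ∀ i, 0 ≤ x i) (i : Fin m → Fin n) :
    0 ≤ (∏ j, x (i j)) / (((∑ j, (i j : ℕ)) + 1 : ℕ) : ℝ) :=
  div_nonneg (Finset.prod_nonneg fun j _ => hx _) (by positivity)

lemma hilbertForm_nonneg {m n : ℕ} {x : Fin n → ℝ} (hx : ∀ i, 0 ≤ x i) :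
    0 ≤ hilbertForm m n x :=
  Finset.sum_nonneg fun i _ => term_nonneg hx i

lemma hilbertForm_smul (m n : ℕ) (s : ℝ) (x : Fin n → ℝ) :
    hilbertForm m n (s • x) = s ^ m * hilbertForm m n x := by
  unfold hilbertForm
  rw [Finset.mul_sum]
  refine Finset.sum_congr rfl fun i _ => ?_
  rw [← mul_div_assoc]
  congr 1
  simp [Finset.prod_mul_distrib]

lemma exists_max (m n : ℕ) (hm : 0 < m) (hn : 0 < n) :
    ∃ x : Fin n → ℝ, ((∀ i, 0 ≤ x i) ∧ (∑ i, |x i| ^ m) = 1) ∧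
      ∀ y : Fin n → ℝ, ((∀ i, 0 ≤ y i) ∧ (∑ i, |y i| ^ m) = 1) →
        hilbertForm m n y ≤ hilbertForm m n x := by
  set S : Set (Fin n → ℝ) := {x | (∀ i, 0 ≤ x i) ∧ (∑ i, |x i| ^ m) = 1} with hS
  have hclosed : IsClosed S := by
    have h1 : IsClosed {x : Fin n → ℝ | ∀ i, 0 ≤ x i} := by
      have : {x : Fin n → ℝ | ∀ i, 0 ≤ x i} = ⋂ i, {x | 0 ≤ x i} := by
        ext x; simp
      rw [this]
      exact isClosed_iInter fun i => isClosed_le continuous_const (continuous_apply i)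
    have h2 : IsClosed {x : Fin n → ℝ | (∑ i, |x i| ^ m) = 1} :=
      isClosed_eq (by fun_prop) continuous_const
    exact h1.inter h2
  have hsub : S ⊆ Set.pi Set.univ (fun _ : Fin n => Set.Icc (-1:ℝ) 1) := by
    rintro x ⟨hx0, hx1⟩ i _
    have h1 : |x i| ^ m ≤ 1 := by
      rw [← hx1]
      exact Finset.single_le_sum (f := fun j => |x j| ^ m) (fun j _ => by positivity)
        (Finset.mem_univ i)
    have h2 : |x i| ≤ 1 := by
      nlinarith [pow_le_one_iff_of_nonneg (abs_nonneg (x i)) hm.ne' |>.1 h1]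
    constructor <;> [linarith [neg_abs_le (x i)]; linarith [le_abs_self (x i)]]
  have hcomp : IsCompact S :=
    (isCompact_univ_pi fun _ => isCompact_Icc).of_isClosed_subset hclosed hsub
  have hne : S.Nonempty := by
    refine ⟨fun i => if i = ⟨0, hn⟩ then 1 else 0, fun i => ?_, ?_⟩
    · dsimp only; split <;> norm_num
    · rw [Finset.sum_eq_single ⟨0, hn⟩]
      · simp [hm.ne']
      · intro b _ hb; simp [hb, hm.ne']
      · simp
  have hcont : Continuous (hilbertForm m n) := by
    unfold hilbertForm
    exact continuous_finset_sum _ fun i _ =>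
      (continuous_finset_prod _ fun j _ => continuous_apply (i j)).div_const _
  obtain ⟨x, hxS, hmax⟩ := hcomp.exists_isMaxOn hne hcont.continuousOn
  exact ⟨x, hxS, fun y hy => hmax hy⟩

noncomputable def pad (n k : ℕ) (x : Fin n → ℝ) (t : ℝ) : Fin k → ℝ :=
  fun i => if h' : (i : ℕ) < n then x ⟨i, h'⟩ else if (i : ℕ) = n then t else 0

lemma pad_castLE {n k : ℕ} (h : n ≤ k) (x : Fin n → ℝ) (t : ℝ) (v : Fin n) :
    pad n k x t (Fin.castLE h v) = x v := by
  simp [pad, v.isLt]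

lemma pad_n {n k : ℕ} (h : n < k) (x : Fin n → ℝ) (t : ℝ) :
    pad n k x t ⟨n, h⟩ = t := by
  simp [pad]

lemma pad_nonneg {n k : ℕ} (x : Fin n → ℝ) (hx : ∀ i, 0 ≤ x i) {t : ℝ} (ht : 0 ≤ t) :
    ∀ i, 0 ≤ pad n k x t i := by
  intro i
  unfold pad
  split
  · exact hx _
  · split
    · exact ht
    · exact le_refl 0

lemma pad_abs_sum {n k : ℕ} (m : ℕ) (hm : 0 < m) (hnk : n < k) (x : Fin n → ℝ)
    {t : ℝ} (ht : 0 ≤ t) :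
    ∑ i : Fin k, |pad n k x t i| ^ m = (∑ i, |x i| ^ m) + t ^ m := by
  classical
  set T : Finset (Fin k) :=
    (Finset.univ.image (Fin.castLE hnk.le)) ∪ {⟨n, hnk⟩} with hT
  have hsub : ∀ i ∈ Finset.univ, i ∉ T → |pad n k x t i| ^ m = 0 := by
    intro i _ hi
    rw [hT, Finset.mem_union, Finset.mem_image, Finset.mem_singleton] at hi
    push_neg at hi
    obtain ⟨h1, h2⟩ := hi
    have hlt : ¬ (i : ℕ) < n := by
      intro hc
      exact (h1 ⟨(i : ℕ), hc⟩ (Finset.mem_univ _)) (by ext; simp)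
    have hne : (i : ℕ) ≠ n := fun hc => h2 (by ext; simp [hc])
    simp [pad, hlt, hne, zero_pow hm.ne']
  rw [← Finset.sum_subset (Finset.subset_univ T) (fun i _ hi => hsub i (Finset.mem_univ i) hi)]
  have hdisj : Disjoint (Finset.univ.image (Fin.castLE hnk.le)) ({⟨n, hnk⟩} : Finset (Fin k)) := by
    simp only [Finset.disjoint_singleton_right, Finset.mem_image]
    rintro ⟨v, -, hv⟩
    have := congrArg Fin.val hv
    simp at this
    omega
  rw [hT, Finset.sum_union hdisj,
    Finset.sum_image (fun a _ b _ h => Fin.castLE_injective hnk.le h)]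
  simp only [Finset.sum_singleton, pad_n hnk, abs_of_nonneg ht]
  congr 1
  exact Finset.sum_congr rfl fun v _ => by rw [pad_castLE]

lemma pad_hilbert_ge {n k : ℕ} (m : ℕ) (hm : 2 ≤ m) (hnk : n < k) (x : Fin n → ℝ)
    (hx : ∀ i, 0 ≤ x i) {t : ℝ} (ht : 0 ≤ t) (i0 : Fin n) :
    hilbertForm m n x + t * (x i0) ^ (m - 1) / ((n + (m - 1) * (i0 : ℕ) + 1 : ℕ) : ℝ)
      ≤ hilbertForm m k (pad n k x t) := by
  classical
  have hy := pad_nonneg (k := k) x hx ht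
  set y := pad n k x t with hydef
  have hj0 : 0 < m := by omega
  set j0 : Fin m := ⟨0, hj0⟩ with hj0def
  set e : (Fin m → Fin n) → (Fin m → Fin k) := fun i => Fin.castLE hnk.le ∘ i with he
  have he_inj : Function.Injective e := fun a b h => by
    funext j
    exact Fin.castLE_injective hnk.le (congrFun h j)
  set istar : Fin m → Fin k := fun j => if j = j0 then ⟨n, hnk⟩ else Fin.castLE hnk.le i0
    with histar
  set T : Finset (Fin m → Fin k) := (Finset.univ.image e) ∪ {istar} with hT
  have hdisj : Disjoint (Finset.univ.image e) ({istar} : Finset (Fin m → Fin k)) := by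
    simp only [Finset.disjoint_singleton_right, Finset.mem_image]
    rintro ⟨v, -, hv⟩
    have := congrArg Fin.val (congrFun hv j0)
    simp [he, histar] at this
    omega
  have hTsum : ∑ i ∈ T, (∏ j, y (i j)) / (((∑ j, (i j : ℕ)) + 1 : ℕ) : ℝ)
      ≤ hilbertForm m k y := by
    unfold hilbertForm
    exact Finset.sum_le_sum_of_subset_of_nonneg (Finset.subset_univ T)
      (fun i _ _ => term_nonneg hy i)
  refine le_trans (le_of_eq ?_) hTsum
  rw [hT, Finset.sum_union hdisj, Finset.sum_image (fun a _ b _ h => he_inj h),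
    Finset.sum_singleton]
  congr 1
  · unfold hilbertForm
    refine Finset.sum_congr rfl fun i _ => ?_
    have h1 : ∏ j, y (e i j) = ∏ j, x (i j) :=
      Finset.prod_congr rfl fun j _ => pad_castLE hnk.le x t (i j)
    have h2 : (∑ j, ((e i j : Fin k) : ℕ)) = ∑ j, ((i j : Fin n) : ℕ) :=
      Finset.sum_congr rfl fun j _ => rfl
    rw [h1, h2]
  · have hcard : (Finset.univ.erase j0).card = m - 1 := by
      rw [Finset.card_erase_of_mem (Finset.mem_univ j0), Finset.card_univ, Fintype.card_fin]
    have hnum : ∏ j, y (istar j) = t * (x i0) ^ (m - 1) := by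
      have hc : ∀ j ∈ Finset.univ.erase j0, y (istar j) = x i0 := by
        intro j hj
        have hj' : j ≠ j0 := (Finset.mem_erase.1 hj).1
        simp [histar, hj', hydef, pad_castLE hnk.le]
      rw [← Finset.mul_prod_erase _ _ (Finset.mem_univ j0), Finset.prod_congr rfl hc,
        Finset.prod_const, hcard]
      simp [histar, hydef, pad_n hnk]
    have hden : (∑ j, (istar j : ℕ)) = n + (m - 1) * (i0 : ℕ) := by
      have hc : ∀ j ∈ Finset.univ.erase j0, ((istar j : Fin k) : ℕ) = (i0 : ℕ) := by
        intro j hj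
        have hj' : j ≠ j0 := (Finset.mem_erase.1 hj).1
        simp [histar, hj']
      rw [← Finset.add_sum_erase _ _ (Finset.mem_univ j0), Finset.sum_congr rfl hc,
        Finset.sum_const, hcard, smul_eq_mul]
      simp [histar]
    rw [hnum, hden]

lemma hilbertForm_le_bound {m k : ℕ} (hm : 0 < m) (y : Fin k → ℝ)
    (h0 : ∀ i, 0 ≤ y i) (h1 : (∑ i, |y i| ^ m) = 1) :
    hilbertForm m k y ≤ ((k : ℝ) ^ m) := by
  have hy1 : ∀ i, y i ≤ 1 := by
    intro i
    have hp : |y i| ^ m ≤ 1 := by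
      rw [← h1]
      exact Finset.single_le_sum (f := fun j => |y j| ^ m) (fun j _ => by positivity)
        (Finset.mem_univ i)
    have := (pow_le_one_iff_of_nonneg (abs_nonneg (y i)) hm.ne').1 hp
    calc y i ≤ |y i| := le_abs_self _
      _ ≤ 1 := this
  have hterm : ∀ i : Fin m → Fin k,
      (∏ j, y (i j)) / (((∑ j, (i j : ℕ)) + 1 : ℕ) : ℝ) ≤ 1 := by
    intro i
    have hprod : ∏ j, y (i j) ≤ 1 := Finset.prod_le_one (fun j _ => h0 _) (fun j _ => hy1 _)
    have hden : (1:ℝ) ≤ (((∑ j, (i j : ℕ)) + 1 : ℕ) : ℝ) := by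
      exact_mod_cast Nat.one_le_iff_ne_zero.2 (Nat.succ_ne_zero _)
    calc (∏ j, y (i j)) / (((∑ j, (i j : ℕ)) + 1 : ℕ) : ℝ)
        ≤ ∏ j, y (i j) :=
          div_le_self (Finset.prod_nonneg fun j _ => h0 _) hden
      _ ≤ 1 := hprod
  calc hilbertForm m k y ≤ ∑ _i : Fin m → Fin k, (1:ℝ) :=
        Finset.sum_le_sum fun i _ => hterm i
    _ = ((k : ℝ) ^ m) := by
        rw [Finset.sum_const, Finset.card_univ]
        simp [Fintype.card_fun]

theorem spectralRadius_strict_mono (m n k : ℕ) (hm : 2 ≤ m) (hn : 0 < n) (hnk : n < k) :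
    sSup {r : ℝ | ∃ x : Fin n → ℝ, (∀ i, 0 ≤ x i) ∧ (∑ i, |x i| ^ m) = 1 ∧
        r = hilbertForm m n x}
      < sSup {r : ℝ | ∃ y : Fin k → ℝ, (∀ i, 0 ≤ y i) ∧ (∑ i, |y i| ^ m) = 1 ∧
        r = hilbertForm m k y} := by
  have hm1 : 0 < m := by omega
  obtain ⟨x, hxS, hmax⟩ := exists_max m n hm1 hn
  set F := hilbertForm m n x with hFdef
  have hF0 : 0 ≤ F := hilbertForm_nonneg hxS.1
  have hsupA : sSup {r : ℝ | ∃ x : Fin n → ℝ, (∀ i, 0 ≤ x i) ∧ (∑ i, |x i| ^ m) = 1 ∧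
      r = hilbertForm m n x} = F := by
    refine IsGreatest.csSup_eq ⟨⟨x, hxS.1, hxS.2, rfl⟩, ?_⟩
    rintro r ⟨z, h1, h2, h3⟩
    rw [h3]
    exact hmax z ⟨h1, h2⟩
  -- pick a positive coordinate
  have hex : ∃ i0, 0 < x i0 := by
    by_contra h
    push_neg at h
    have h0 : ∀ i, x i = 0 := fun i => le_antisymm (h i) (hxS.1 i)
    have := hxS.2
    simp [h0, zero_pow hm1.ne'] at this
  obtain ⟨i0, hi0⟩ := hex
  set D : ℝ := ((n + (m - 1) * (i0 : ℕ) + 1 : ℕ) : ℝ) with hDdef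
  have hD : 0 < D := by positivity
  set c : ℝ := (x i0) ^ (m - 1) / D with hcdef
  have hc : 0 < c := div_pos (pow_pos hi0 _) hD
  set t : ℝ := min 1 (c / (2 * (F + 1))) with htdef
  have htpos : 0 < t := lt_min one_pos (div_pos hc (by linarith))
  have ht1 : t ≤ 1 := min_le_left _ _
  have htc : t * (2 * (F + 1)) ≤ c := by
    have := min_le_right 1 (c / (2 * (F + 1)))
    have h2F : (0:ℝ) < 2 * (F + 1) := by linarith
    calc t * (2 * (F + 1)) ≤ (c / (2 * (F + 1))) * (2 * (F + 1)) := by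
          apply mul_le_mul_of_nonneg_right this h2F.le
      _ = c := div_mul_cancel₀ _ h2F.ne'
  have hkey : F * t ^ m < c * t := by
    have hpow : t ^ m = t ^ (m - 1) * t := by
      rw [← pow_succ]
      congr 1
      omega
    have hple : t ^ (m - 1) ≤ t := by
      calc t ^ (m - 1) ≤ t ^ 1 := pow_le_pow_of_le_one htpos.le ht1 (by omega)
        _ = t := pow_one t
    have h2 : F * t ^ (m - 1) ≤ F * t := mul_le_mul_of_nonneg_left hple hF0
    rw [hpow, ← mul_assoc]
    nlinarith [mul_le_mul_of_nonneg_right h2 htpos.le, mul_pos htpos htpos, htc, hF0, htpos]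
  -- construct the competitor in dimension k
  set y : Fin k → ℝ := pad n k x t with hydef
  have hy0 : ∀ i, 0 ≤ y i := pad_nonneg x hxS.1 htpos.le
  have hysum : ∑ i, |y i| ^ m = 1 + t ^ m := by
    rw [hydef, pad_abs_sum m hm1 hnk x htpos.le, hxS.2]
  have hb : (0:ℝ) < 1 + t ^ m := by positivity
  set s : ℝ := (1 + t ^ m) ^ (-(m : ℝ)⁻¹) with hsdef
  have hs : 0 < s := Real.rpow_pos_of_pos hb _
  have hsm : s ^ m = (1 + t ^ m)⁻¹ := by
    rw [hsdef, ← Real.rpow_natCast ((1 + t ^ m) ^ (-(m : ℝ)⁻¹)) m, ← Real.rpow_mul hb.le]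
    have : (-(m : ℝ)⁻¹) * (m : ℕ) = -1 := by
      field_simp
    rw [this, Real.rpow_neg_one]
  set z : Fin k → ℝ := s • y with hzdef
  have hz0 : ∀ i, 0 ≤ z i := fun i => mul_nonneg hs.le (hy0 i)
  have hzsum : ∑ i, |z i| ^ m = 1 := by
    have : ∀ i, |z i| ^ m = s ^ m * |y i| ^ m := by
      intro i
      rw [hzdef, Pi.smul_apply, smul_eq_mul, abs_mul, mul_pow, abs_of_nonneg hs.le]
    rw [Finset.sum_congr rfl fun i _ => this i, ← Finset.mul_sum, hysum, hsm,
      inv_mul_cancel₀ hb.ne']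
  have hfy : F + t * c ≤ hilbertForm m k y := by
    have := pad_hilbert_ge m hm hnk x hxS.1 htpos.le i0
    rw [← hDdef] at this
    calc F + t * c = F + t * (x i0) ^ (m - 1) / D := by
          rw [hcdef]; ring
      _ ≤ hilbertForm m k y := this
  have hfz : hilbertForm m k z = (1 + t ^ m)⁻¹ * hilbertForm m k y := by
    rw [hzdef, hilbertForm_smul, hsm]
  have hFlt : F < hilbertForm m k z := by
    rw [hfz]
    have h1 : F < (1 + t ^ m)⁻¹ * (F + t * c) := by
      rw [inv_mul_eq_div, lt_div_iff₀ hb]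
      nlinarith
    calc F < (1 + t ^ m)⁻¹ * (F + t * c) := h1
      _ ≤ (1 + t ^ m)⁻¹ * hilbertForm m k y := by
          apply mul_le_mul_of_nonneg_left hfy (by positivity)
  have hbdd : BddAbove {r : ℝ | ∃ y : Fin k → ℝ, (∀ i, 0 ≤ y i) ∧ (∑ i, |y i| ^ m) = 1 ∧
      r = hilbertForm m k y} := by
    refine ⟨(k : ℝ) ^ m, ?_⟩
    rintro r ⟨w, h1, h2, h3⟩
    rw [h3]
    exact hilbertForm_le_bound hm1 w h1 h2
  have hmem : hilbertForm m k z ∈ {r : ℝ | ∃ y : Fin k → ℝ, (∀ i, 0 ≤ y i) ∧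
      (∑ i, |y i| ^ m) = 1 ∧ r = hilbertForm m k y} := ⟨z, hz0, hzsum, rfl⟩
  calc sSup {r : ℝ | ∃ x : Fin n → ℝ, (∀ i, 0 ≤ x i) ∧ (∑ i, |x i| ^ m) = 1 ∧
        r = hilbertForm m n x} = F := hsupA
    _ < hilbertForm m k z := hFlt
    _ ≤ sSup {r : ℝ | ∃ y : Fin k → ℝ, (∀ i, 0 ≤ y i) ∧ (∑ i, |y i| ^ m) = 1 ∧
        r = hilbertForm m k y} := le_csSup hbdd hmem
end
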